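/- arXiv:math/0611670 — 2 statements merged into one kernel-verified Lean document; each statement's English description precedes it below -/
import Mathlib

section
/- Let η : ℝ → ℝ² be a C⁴ immersed plane curve with g = |η'|², n = (-η₂',η₁')/|η'|, b = η''·n. Then the normal component of the fourth derivative satisfies η''''·n = b'' - g^{-1} b³ - (3/4) g^{-2} (g')² b + (1/2) g^{-1} g' b' + g^{-1} g'' b. -/
noncomputable section

/-- Euclidean dot product on `ℝ²`. -/
def dot (a b : ℝ × ℝ) : ℝ := a.1 * b.1 + a.2 * b.2

set_option maxHeartbeats 4000000 in
/-- Normal component of the fourth derivative of a `C⁴` immersed plane curve: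
`η''''·n = b'' - g⁻¹ b³ - (3/4) g⁻² (g')² b + (1/2) g⁻¹ g' b' + g⁻¹ g'' b`. -/
theorem stmt_5 (η : ℝ → ℝ × ℝ) (hη : ContDiff ℝ 4 η)
    (himm : ∀ s, deriv η s ≠ 0)
    (g : ℝ → ℝ) (hg : g = fun s => dot (deriv η s) (deriv η s))
    (n : ℝ → ℝ × ℝ)
    (hn : n = fun s => (Real.sqrt (g s))⁻¹ • (-(deriv η s).2, (deriv η s).1))
    (b : ℝ → ℝ) (hb : b = fun s => dot (deriv (deriv η) s) (n s)) :
    ∀ s, dot (iteratedDeriv 4 η s) (n s)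
      = deriv (deriv b) s - (g s)⁻¹ * (b s) ^ 3
        - (3 / 4) * (g s)⁻¹ ^ 2 * (deriv g s) ^ 2 * b s
        + (1 / 2) * (g s)⁻¹ * deriv g s * deriv b s
        + (g s)⁻¹ * deriv (deriv g) s * b s := by
  intro s
  have hx : ContDiff ℝ 4 (fun t => (η t).1) := hη.fst
  have hy : ContDiff ℝ 4 (fun t => (η t).2) := hη.snd
  set x1 := deriv (fun t => (η t).1) with hx1d
  set y1 := deriv (fun t => (η t).2) with hy1d
  set x2 := deriv x1 with hx2d
  set y2 := deriv y1 with hy2d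
  set x3 := deriv x2 with hx3d
  set y3 := deriv y2 with hy3d
  set x4 := deriv x3 with hx4d
  set y4 := deriv y3 with hy4d
  have scd : ∀ (f : ℝ → ℝ) (m : ℕ), ContDiff ℝ ((m : ℕ∞) + 1) f → ContDiff ℝ (m : ℕ∞) (deriv f) := by
    intro f m hf
    exact (contDiff_succ_iff_deriv.mp (by exact_mod_cast hf)).2.2
  have hx1c : ContDiff ℝ 3 x1 := scd _ 3 (by exact_mod_cast hx)
  have hy1c : ContDiff ℝ 3 y1 := scd _ 3 (by exact_mod_cast hy)
  have hx2c : ContDiff ℝ 2 x2 := scd _ 2 (by exact_mod_cast hx1c)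
  have hy2c : ContDiff ℝ 2 y2 := scd _ 2 (by exact_mod_cast hy1c)
  have hx3c : ContDiff ℝ 1 x3 := scd _ 1 (by exact_mod_cast hx2c)
  have hy3c : ContDiff ℝ 1 y3 := scd _ 1 (by exact_mod_cast hy2c)
  have hdx0 : ∀ t, HasDerivAt (fun t => (η t).1) (x1 t) t :=
    fun t => ((hx.differentiable (by norm_num)) t).hasDerivAt
  have hdy0 : ∀ t, HasDerivAt (fun t => (η t).2) (y1 t) t :=
    fun t => ((hy.differentiable (by norm_num)) t).hasDerivAt
  have hdx1 : ∀ t, HasDerivAt x1 (x2 t) t :=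
    fun t => ((hx1c.differentiable (by norm_num)) t).hasDerivAt
  have hdy1 : ∀ t, HasDerivAt y1 (y2 t) t :=
    fun t => ((hy1c.differentiable (by norm_num)) t).hasDerivAt
  have hdx2 : ∀ t, HasDerivAt x2 (x3 t) t :=
    fun t => ((hx2c.differentiable (by norm_num)) t).hasDerivAt
  have hdy2 : ∀ t, HasDerivAt y2 (y3 t) t :=
    fun t => ((hy2c.differentiable (by norm_num)) t).hasDerivAt
  have hdx3 : ∀ t, HasDerivAt x3 (x4 t) t :=
    fun t => ((hx3c.differentiable one_ne_zero) t).hasDerivAt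
  have hdy3 : ∀ t, HasDerivAt y3 (y4 t) t :=
    fun t => ((hy3c.differentiable one_ne_zero) t).hasDerivAt
  -- derivatives of η as pairs
  have hdη : ∀ t, HasDerivAt η (x1 t, y1 t) t := fun t => (hdx0 t).prodMk (hdy0 t)
  have hderη : deriv η = fun t => (x1 t, y1 t) := funext fun t => (hdη t).deriv
  have hdη1 : ∀ t, HasDerivAt (deriv η) (x2 t, y2 t) t := by
    rw [hderη]; exact fun t => (hdx1 t).prodMk (hdy1 t)
  have hderη2 : deriv (deriv η) = fun t => (x2 t, y2 t) := funext fun t => (hdη1 t).deriv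
  have hdη2 : ∀ t, HasDerivAt (deriv (deriv η)) (x3 t, y3 t) t := by
    rw [hderη2]; exact fun t => (hdx2 t).prodMk (hdy2 t)
  have hderη3 : deriv (deriv (deriv η)) = fun t => (x3 t, y3 t) := funext fun t => (hdη2 t).deriv
  have hdη3 : ∀ t, HasDerivAt (deriv (deriv (deriv η))) (x4 t, y4 t) t := by
    rw [hderη3]; exact fun t => (hdx3 t).prodMk (hdy3 t)
  have hit4 : iteratedDeriv 4 η s = (x4 s, y4 s) := by
    have h4 : iteratedDeriv 4 η = deriv (deriv (deriv (deriv η))) := by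
      simp [iteratedDeriv_succ, iteratedDeriv_zero]
    rw [h4]; exact (hdη3 s).deriv
  -- g
  have hgx : g = fun t => x1 t * x1 t + y1 t * y1 t := by
    funext t; rw [hg]; simp [dot, hderη]
  have hgpos : ∀ t, 0 < x1 t * x1 t + y1 t * y1 t := by
    intro t
    have h := himm t
    rw [hderη] at h
    simp only [Prod.ext_iff, Prod.fst_zero, Prod.snd_zero, ne_eq, not_and_or] at h
    rcases h with h | h
    · nlinarith [mul_self_pos.mpr h, mul_self_nonneg (y1 t)]
    · nlinarith [mul_self_pos.mpr h, mul_self_nonneg (x1 t)]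
  set u : ℝ → ℝ := fun t => Real.sqrt (x1 t * x1 t + y1 t * y1 t) with hud
  have hupos : ∀ t, 0 < u t := fun t => Real.sqrt_pos.2 (hgpos t)
  have huu : ∀ t, u t * u t = x1 t * x1 t + y1 t * y1 t :=
    fun t => Real.mul_self_sqrt (hgpos t).le
  -- derivative of g
  have hdG : ∀ t, HasDerivAt (fun t => x1 t * x1 t + y1 t * y1 t)
      (2 * (x1 t * x2 t + y1 t * y2 t)) t := by
    intro t
    have h := ((hdx1 t).fun_mul (hdx1 t)).fun_add ((hdy1 t).fun_mul (hdy1 t))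
    exact h.congr_deriv (by ring)
  have hderg : deriv g = fun t => 2 * (x1 t * x2 t + y1 t * y2 t) := by
    rw [hgx]; exact funext fun t => (hdG t).deriv
  have hdG1 : ∀ t, HasDerivAt (fun t => 2 * (x1 t * x2 t + y1 t * y2 t))
      (2 * (x2 t * x2 t + x1 t * x3 t + (y2 t * y2 t + y1 t * y3 t))) t := by
    intro t
    have h := (((hdx1 t).fun_mul (hdx2 t)).fun_add ((hdy1 t).fun_mul (hdy2 t))).const_mul 2
    convert h using 1 <;> ring
  have hderg2 : deriv (deriv g) s
      = 2 * (x2 s * x2 s + x1 s * x3 s + (y2 s * y2 s + y1 s * y3 s)) := by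
    rw [hderg]; exact (hdG1 s).deriv
  -- derivative of u
  have hdu : ∀ t, HasDerivAt u (2 * (x1 t * x2 t + y1 t * y2 t) / (2 * u t)) t :=
    fun t => (hdG t).sqrt (hgpos t).ne'
  -- b
  have hbW : b = fun t => (x2 t * y1 t * (-1) + y2 t * x1 t) * (u t)⁻¹ := by
    funext t
    rw [hb, hn, hgx, hderη2, hderη]
    simp [dot, Prod.smul_mk]
    all_goals ring
  -- derivative of b
  have hdW : ∀ t, HasDerivAt (fun t => x2 t * y1 t * (-1) + y2 t * x1 t)
      (x3 t * y1 t * (-1) + y3 t * x1 t) t := by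
    intro t
    have h := (((hdx2 t).fun_mul (hdy1 t)).mul_const (-1)).fun_add ((hdy2 t).fun_mul (hdx1 t))
    exact h.congr_deriv (by ring)
  have hdui : ∀ t, HasDerivAt (fun t => (u t)⁻¹)
      (-(2 * (x1 t * x2 t + y1 t * y2 t) / (2 * u t)) / u t ^ 2) t :=
    fun t => (hdu t).inv (hupos t).ne'
  have hdb : ∀ t, HasDerivAt b
      ((x3 t * y1 t * (-1) + y3 t * x1 t) * (u t)⁻¹
        + (x2 t * y1 t * (-1) + y2 t * x1 t)
          * (-(2 * (x1 t * x2 t + y1 t * y2 t) / (2 * u t)) / u t ^ 2)) t := by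
    rw [hbW]; exact fun t => (hdW t).mul (hdui t)
  have hderb : deriv b = fun t =>
      (x3 t * y1 t * (-1) + y3 t * x1 t) * (u t)⁻¹
        + (x2 t * y1 t * (-1) + y2 t * x1 t)
          * (-(2 * (x1 t * x2 t + y1 t * y2 t) / (2 * u t)) / u t ^ 2) :=
    funext fun t => (hdb t).deriv
  -- second derivative of b
  have hdW1 : ∀ t, HasDerivAt (fun t => x3 t * y1 t * (-1) + y3 t * x1 t)
      ((x4 t * y1 t + x3 t * y2 t) * (-1) + (y4 t * x1 t + y3 t * x2 t)) t := by
    intro t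
    have h := (((hdx3 t).fun_mul (hdy1 t)).mul_const (-1)).fun_add ((hdy3 t).fun_mul (hdx1 t))
    convert h using 1 <;> ring
  -- derivative of the correction factor  q t = -(G1 t / (2 u t)) / (u t)^2
  have hdr : ∀ t, HasDerivAt (fun t => 2 * (x1 t * x2 t + y1 t * y2 t) / (2 * u t))
      ((2 * (x2 t * x2 t + x1 t * x3 t + (y2 t * y2 t + y1 t * y3 t)) * (2 * u t)
        - 2 * (x1 t * x2 t + y1 t * y2 t) * (2 * (2 * (x1 t * x2 t + y1 t * y2 t) / (2 * u t))))
        / (2 * u t) ^ 2) t := by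
    intro t
    exact (hdG1 t).div ((hdu t).const_mul 2) (mul_ne_zero two_ne_zero (hupos t).ne')
  have hdusq : ∀ t, HasDerivAt (fun t => u t ^ 2)
      (2 * u t ^ 1 * (2 * (x1 t * x2 t + y1 t * y2 t) / (2 * u t))) t := by
    intro t
    have h := (hdu t).fun_pow 2
    norm_num at h ⊢
    convert h using 1
  have hdq : ∀ t, HasDerivAt
      (fun t => -(2 * (x1 t * x2 t + y1 t * y2 t) / (2 * u t)) / u t ^ 2)
      ((-((2 * (x2 t * x2 t + x1 t * x3 t + (y2 t * y2 t + y1 t * y3 t)) * (2 * u t)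
        - 2 * (x1 t * x2 t + y1 t * y2 t) * (2 * (2 * (x1 t * x2 t + y1 t * y2 t) / (2 * u t))))
        / (2 * u t) ^ 2) * u t ^ 2
        - -(2 * (x1 t * x2 t + y1 t * y2 t) / (2 * u t))
          * (2 * u t ^ 1 * (2 * (x1 t * x2 t + y1 t * y2 t) / (2 * u t))))
        / (u t ^ 2) ^ 2) t := by
    intro t
    exact ((hdr t).neg).div (hdusq t) (pow_ne_zero 2 (hupos t).ne')
  have hdB1s := ((hdW1 s).fun_mul (hdui s)).fun_add ((hdW s).fun_mul (hdq s))
  have hderb2 := hdB1s.deriv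
  -- assemble the goal
  have hLHS : dot (iteratedDeriv 4 η s) (n s)
      = (x4 s * y1 s * (-1) + y4 s * x1 s) * (u s)⁻¹ := by
    rw [hit4, hn, hgx, hderη]
    simp [dot, Prod.smul_mk]
    all_goals ring
  rw [hLHS, hderg2, hderb, hdB1s.deriv, hderg, hbW, hgx]
  have hU : u s ≠ 0 := (hupos s).ne'
  have h2 : u s ^ 2 = x1 s * x1 s + y1 s * y1 s := by rw [sq]; exact huu s
  have h3 : u s ^ 3 = (x1 s * x1 s + y1 s * y1 s) * u s := by
    rw [show (3 : ℕ) = 2 + 1 from rfl, pow_succ, h2]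
  have h4 : u s ^ 4 = (x1 s * x1 s + y1 s * y1 s) ^ 2 := by
    rw [show (4 : ℕ) = 2 * 2 from rfl, pow_mul, h2]
  have h5 : u s ^ 5 = (x1 s * x1 s + y1 s * y1 s) ^ 2 * u s := by
    rw [show (5 : ℕ) = 4 + 1 from rfl, pow_succ, h4]
  have h6 : u s ^ 6 = (x1 s * x1 s + y1 s * y1 s) ^ 3 := by
    rw [show (6 : ℕ) = 2 * 3 from rfl, pow_mul, h2]
  have h7 : u s ^ 7 = (x1 s * x1 s + y1 s * y1 s) ^ 3 * u s := by
    rw [show (7 : ℕ) = 6 + 1 from rfl, pow_succ, h6]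
  have h8 : u s ^ 8 = (x1 s * x1 s + y1 s * y1 s) ^ 4 := by
    rw [show (8 : ℕ) = 2 * 4 from rfl, pow_mul, h2]
  have h9 : u s ^ 9 = (x1 s * x1 s + y1 s * y1 s) ^ 4 * u s := by
    rw [show (9 : ℕ) = 8 + 1 from rfl, pow_succ, h8]
  have h10 : u s ^ 10 = (x1 s * x1 s + y1 s * y1 s) ^ 5 := by
    rw [show (10 : ℕ) = 2 * 5 from rfl, pow_mul, h2]
  have h11 : u s ^ 11 = (x1 s * x1 s + y1 s * y1 s) ^ 5 * u s := by
    rw [show (11 : ℕ) = 10 + 1 from rfl, pow_succ, h10]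
  have h12 : u s ^ 12 = (x1 s * x1 s + y1 s * y1 s) ^ 6 := by
    rw [show (12 : ℕ) = 2 * 6 from rfl, pow_mul, h2]
  have h13 : u s ^ 13 = (x1 s * x1 s + y1 s * y1 s) ^ 6 * u s := by
    rw [show (13 : ℕ) = 12 + 1 from rfl, pow_succ, h12]
  have h14 : u s ^ 14 = (x1 s * x1 s + y1 s * y1 s) ^ 7 := by
    rw [show (14 : ℕ) = 2 * 7 from rfl, pow_mul, h2]
  have h15 : u s ^ 15 = (x1 s * x1 s + y1 s * y1 s) ^ 7 * u s := by
    rw [show (15 : ℕ) = 14 + 1 from rfl, pow_succ, h14]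
  have h16 : u s ^ 16 = (x1 s * x1 s + y1 s * y1 s) ^ 8 := by
    rw [show (16 : ℕ) = 2 * 8 from rfl, pow_mul, h2]
  have h17 : u s ^ 17 = (x1 s * x1 s + y1 s * y1 s) ^ 8 * u s := by
    rw [show (17 : ℕ) = 16 + 1 from rfl, pow_succ, h16]
  have h18 : u s ^ 18 = (x1 s * x1 s + y1 s * y1 s) ^ 9 := by
    rw [show (18 : ℕ) = 2 * 9 from rfl, pow_mul, h2]
  have h19 : u s ^ 19 = (x1 s * x1 s + y1 s * y1 s) ^ 9 * u s := by
    rw [show (19 : ℕ) = 18 + 1 from rfl, pow_succ, h18]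
  have h20 : u s ^ 20 = (x1 s * x1 s + y1 s * y1 s) ^ 10 := by
    rw [show (20 : ℕ) = 2 * 10 from rfl, pow_mul, h2]
  have h21 : u s ^ 21 = (x1 s * x1 s + y1 s * y1 s) ^ 10 * u s := by
    rw [show (21 : ℕ) = 20 + 1 from rfl, pow_succ, h20]
  have h22 : u s ^ 22 = (x1 s * x1 s + y1 s * y1 s) ^ 11 := by
    rw [show (22 : ℕ) = 2 * 11 from rfl, pow_mul, h2]
  have h23 : u s ^ 23 = (x1 s * x1 s + y1 s * y1 s) ^ 11 * u s := by
    rw [show (23 : ℕ) = 22 + 1 from rfl, pow_succ, h22]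
  have h24 : u s ^ 24 = (x1 s * x1 s + y1 s * y1 s) ^ 12 := by
    rw [show (24 : ℕ) = 2 * 12 from rfl, pow_mul, h2]
  have hGne : x1 s * x1 s + y1 s * y1 s ≠ 0 := (hgpos s).ne'
  have hGne' : x1 s ^ 2 + y1 s ^ 2 ≠ 0 := by rw [sq, sq]; exact hGne
  field_simp
  ring_nf
  simp only [h24, h23, h22, h21, h20, h19, h18, h17, h16, h15, h14, h13, h12, h11, h10, h9, h8, h7, h6, h5, h4, h3, h2]
  ring
end
end

section
/- Let Γ be the circle (a compact 1-dimensional manifold). For f, g ∈ H^{1.5}(Γ), the product satisfies ‖fg‖_{H^{1.5}(Γ)} ≤ C ( ‖f‖_{H^{1.25}(Γ)} ‖g‖_{H^{1.5}(Γ)} + ‖f‖_{H^{1.5}(Γ)} ‖g‖_{H^{1.25}(Γ)} ) for a constant C depending only on Γ. -/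
open scoped Real

noncomputable section

/-- The `H^s` norm of a function on the unit circle, defined via Fourier series. -/
def HsNorm (s : ℝ) (f : UnitAddCircle → ℂ) : ℝ :=
  Real.sqrt (∑' k : ℤ, (1 + (k : ℝ) ^ 2) ^ s * ‖fourierCoeff f k‖ ^ 2)

/-- Membership in the fractional Sobolev space `H^s` on the unit circle. -/
def MemHs (s : ℝ) (f : UnitAddCircle → ℂ) : Prop :=
  Summable fun k : ℤ => (1 + (k : ℝ) ^ 2) ^ s * ‖fourierCoeff f k‖ ^ 2

section Stmt9Aux

open scoped ENNReal
open MeasureTheory AddCircle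

set_option maxHeartbeats 1000000

namespace Stmt9

def a (k : ℤ) : ℝ := 1 + (k : ℝ) ^ 2
lemma a_pos (k : ℤ) : 0 < a k := by simp only [a]; positivity
lemma one_le_a (k : ℤ) : 1 ≤ a k := by
  have : 0 ≤ (k:ℝ)^2 := sq_nonneg _
  simp only [a]; linarith

lemma rpow_sq (k : ℤ) (t : ℝ) : (a k ^ t) ^ (2:ℕ) = a k ^ (2*t) := by
  rw [← Real.rpow_natCast (a k ^ t) 2, ← Real.rpow_mul (a_pos k).le]
  norm_num [mul_comm]

/-- ENNReal weight -/
def w (k : ℤ) : ℝ≥0∞ := ENNReal.ofReal (a k ^ ((3:ℝ)/4))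
/-- ENNReal modulus of Fourier coefficient -/
def Ef (f : UnitAddCircle → ℂ) (k : ℤ) : ℝ≥0∞ := ENNReal.ofReal ‖fourierCoeff f k‖

lemma sq_add_le_ennreal (x y : ℝ≥0∞) : (x + y) ^ 2 ≤ 3 * (x ^ 2 + y ^ 2) := by
  have hxy : x * y ≤ x ^ 2 + y ^ 2 := by
    rcases le_total x y with h | h
    · calc x * y ≤ y * y := mul_le_mul_left h y
        _ = y ^ 2 := (sq y).symm
        _ ≤ x ^ 2 + y ^ 2 := le_add_self
    · calc x * y ≤ x * x := mul_le_mul_right h x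
        _ = x ^ 2 := (sq x).symm
        _ ≤ x ^ 2 + y ^ 2 := le_self_add
  calc (x + y) ^ 2 = x ^ 2 + y ^ 2 + (x * y + x * y) := by ring
    _ ≤ x ^ 2 + y ^ 2 + (x ^ 2 + y ^ 2 + (x ^ 2 + y ^ 2)) := by
        exact add_le_add le_rfl (add_le_add hxy hxy)
    _ = 3 * (x ^ 2 + y ^ 2) := by ring


lemma weight_ineq (k m : ℤ) :
    a k ^ ((3:ℝ)/4) ≤ 4 * (a m ^ ((3:ℝ)/4) + a (k - m) ^ ((3:ℝ)/4)) := by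
  set j := k - m with hj
  have hk : (k:ℝ) = (m:ℝ) + (j:ℝ) := by push_cast [hj]; ring
  have h1 : a k ≤ 4 * max (a m) (a j) := by
    have h2 : (k:ℝ)^2 ≤ 2*(m:ℝ)^2 + 2*(j:ℝ)^2 := by
      rw [hk]; nlinarith [sq_nonneg ((m:ℝ) - j)]
    have := le_max_left (a m) (a j)
    have := le_max_right (a m) (a j)
    simp only [a] at *
    nlinarith [sq_nonneg (m:ℝ), sq_nonneg (j:ℝ)]
  calc a k ^ ((3:ℝ)/4) ≤ (4 * max (a m) (a j)) ^ ((3:ℝ)/4) := by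
        apply Real.rpow_le_rpow (a_pos k).le h1 (by norm_num)
    _ = (4:ℝ) ^ ((3:ℝ)/4) * max (a m) (a j) ^ ((3:ℝ)/4) := by
        rw [Real.mul_rpow (by norm_num) (le_max_of_le_left (a_pos m).le)]
    _ ≤ 4 * max (a m) (a j) ^ ((3:ℝ)/4) := by
        have h4 : (4:ℝ) ^ ((3:ℝ)/4) ≤ (4:ℝ) ^ (1:ℝ) := by
          apply Real.rpow_le_rpow_of_exponent_le (by norm_num) (by norm_num)
        rw [Real.rpow_one] at h4
        have : (0:ℝ) ≤ max (a m) (a j) ^ ((3:ℝ)/4) :=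
          Real.rpow_nonneg (le_max_of_le_left (a_pos m).le) _
        nlinarith
    _ ≤ 4 * (a m ^ ((3:ℝ)/4) + a j ^ ((3:ℝ)/4)) := by
        have : max (a m) (a j) ^ ((3:ℝ)/4) ≤ a m ^ ((3:ℝ)/4) + a j ^ ((3:ℝ)/4) := by
          rcases max_cases (a m) (a j) with ⟨h, _⟩ | ⟨h, _⟩ <;> rw [h]
          · nlinarith [Real.rpow_nonneg (a_pos j).le ((3:ℝ)/4)]
          · nlinarith [Real.rpow_nonneg (a_pos m).le ((3:ℝ)/4)]
        nlinarith

/-- Summability of `(1+k²)⁻¹` over `ℤ`. -/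
lemma summable_inv_a : Summable (fun k : ℤ => (a k)⁻¹) := by
  have hnat : Summable (fun n : ℕ => (a n)⁻¹) := by
    have base : Summable (fun n : ℕ => 1 / ((n:ℝ)) ^ 2) := by
      rw [Real.summable_one_div_nat_pow]; norm_num
    have shifted : Summable (fun n : ℕ => 1 / ((n:ℝ) + 1) ^ 2) := by
      have := (summable_nat_add_iff (f := fun n : ℕ => 1 / ((n:ℝ)) ^ 2) 1).2 base
      refine this.congr fun n => ?_
      push_cast; ring
    refine Summable.of_nonneg_of_le (fun n => (inv_nonneg.2 (a_pos _).le)) (fun n => ?_)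
      (shifted.mul_left 2)
    have hpos1 : (0:ℝ) < a (n:ℤ) := a_pos _
    have hpos2 : (0:ℝ) < ((n:ℝ)+1)^2 := by positivity
    have h1 : ((n:ℝ)+1)^2 ≤ 2 * a (n:ℤ) := by
      simp only [a]; push_cast; nlinarith [sq_nonneg ((n:ℝ)-1)]
    calc (a (n:ℤ))⁻¹ = 1 / a (n:ℤ) := (one_div _).symm
      _ ≤ 2 * (1/((n:ℝ)+1)^2) := by
          rw [mul_one_div, div_le_div_iff₀ hpos1 hpos2]; nlinarith
  apply Summable.of_nat_of_neg
  · exact hnat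
  · refine hnat.congr fun n => ?_
    simp [a]

lemma summable_a_neg : Summable (fun k : ℤ => a k ^ (-(5:ℝ)/4)) := by
  refine Summable.of_nonneg_of_le (fun k => Real.rpow_nonneg (a_pos k).le _) (fun k => ?_)
    summable_inv_a
  have h1 : a k ^ (-(5:ℝ)/4) ≤ a k ^ (-1:ℝ) :=
    Real.rpow_le_rpow_of_exponent_le (one_le_a k) (by norm_num)
  rwa [Real.rpow_neg_one] at h1


/-- Cauchy–Schwarz for `tsum` in `ℝ≥0∞`. -/
lemma tsum_CS (p q : ℤ → ℝ≥0∞) :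
    (∑' k, p k * q k) ^ 2 ≤ (∑' k, p k ^ 2) * (∑' k, q k ^ 2) := by
  have hpq : (2 : ℝ).HolderConjugate 2 := Real.HolderConjugate.two_two
  have h := ENNReal.lintegral_mul_le_Lp_mul_Lq (Measure.count : Measure ℤ) hpq
    (measurable_of_countable p).aemeasurable (measurable_of_countable q).aemeasurable
  simp only [Pi.mul_apply, lintegral_count] at h
  have h2 : ∀ x : ℝ≥0∞, x ^ (2 : ℝ) = x ^ (2 : ℕ) := by
    intro x
    rw [← ENNReal.rpow_natCast x 2]; norm_num
  simp only [h2] at h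
  calc (∑' k, p k * q k) ^ 2
      ≤ ((∑' k, p k ^ (2:ℕ)) ^ (1/(2:ℝ)) * (∑' k, q k ^ (2:ℕ)) ^ (1/(2:ℝ))) ^ 2 := by
        exact pow_le_pow_left' h 2
    _ = (∑' k, p k ^ 2) * (∑' k, q k ^ 2) := by
        rw [mul_pow]
        rw [← ENNReal.rpow_natCast (_ ^ (1/(2:ℝ))) 2, ← ENNReal.rpow_natCast (_ ^ (1/(2:ℝ))) 2,
          ← ENNReal.rpow_mul, ← ENNReal.rpow_mul]
        norm_num

/-- `ℓ² * ℓ¹ → ℓ²` Young inequality for convolution on `ℤ`, in `ℝ≥0∞`. -/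
lemma tsum_young (u v : ℤ → ℝ≥0∞) :
    (∑' k, (∑' m, u m * v (k - m)) ^ 2) ≤ (∑' m, u m ^ 2) * (∑' m, v m) ^ 2 := by
  have hhalf : ∀ x : ℝ≥0∞, x ^ ((1:ℝ)/2) * x ^ ((1:ℝ)/2) = x := by
    intro x
    rw [← ENNReal.rpow_add_of_nonneg ((1:ℝ)/2) ((1:ℝ)/2) (by norm_num) (by norm_num)]
    norm_num
  have hsq : ∀ x : ℝ≥0∞, (x ^ ((1:ℝ)/2)) ^ (2:ℕ) = x := by
    intro x
    rw [← ENNReal.rpow_natCast (_ ^ ((1:ℝ)/2)) 2, ← ENNReal.rpow_mul]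
    norm_num
  have key : ∀ k, (∑' m, u m * v (k - m)) ^ 2
      ≤ (∑' m, u m ^ 2 * v (k - m)) * (∑' m, v m) := by
    intro k
    have h := tsum_CS (fun m => u m * v (k - m) ^ ((1:ℝ)/2)) (fun m => v (k - m) ^ ((1:ℝ)/2))
    have e1 : ∀ m, (u m * v (k - m) ^ ((1:ℝ)/2)) * v (k - m) ^ ((1:ℝ)/2) = u m * v (k - m) := by
      intro m; rw [mul_assoc, hhalf]
    have e2 : ∀ m, (u m * v (k - m) ^ ((1:ℝ)/2)) ^ (2:ℕ) = u m ^ 2 * v (k - m) := by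
      intro m; rw [mul_pow, hsq]
    simp only [e1, e2, hsq] at h
    calc (∑' m, u m * v (k - m)) ^ 2 ≤ (∑' m, u m ^ 2 * v (k - m)) * (∑' m, v (k - m)) := h
      _ = (∑' m, u m ^ 2 * v (k - m)) * (∑' m, v m) := by
          congr 1
          exact (Equiv.subLeft k).tsum_eq v
  calc (∑' k, (∑' m, u m * v (k - m)) ^ 2)
      ≤ ∑' k, (∑' m, u m ^ 2 * v (k - m)) * (∑' m, v m) := ENNReal.tsum_le_tsum key
    _ = (∑' k, ∑' m, u m ^ 2 * v (k - m)) * (∑' m, v m) := by rw [ENNReal.tsum_mul_right]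
    _ = (∑' m, u m ^ 2 * ∑' k, v (k - m)) * (∑' m, v m) := by
        rw [ENNReal.tsum_comm]
        congr 1
        exact tsum_congr fun m => ENNReal.tsum_mul_left
    _ = (∑' m, u m ^ 2) * (∑' m, v m) ^ 2 := by
        have : ∀ m : ℤ, ∑' k, v (k - m) = ∑' j, v j := fun m => (Equiv.subRight m).tsum_eq v
        simp only [this]
        rw [ENNReal.tsum_mul_right, sq, mul_assoc]


lemma cont_integrable (f : UnitAddCircle → ℂ) (hf : Continuous f) :
    Integrable f (haarAddCircle : Measure UnitAddCircle) := by
  have : IsFiniteMeasureOnCompacts (haarAddCircle : Measure UnitAddCircle) :=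
    isFiniteMeasure_iff_isFiniteMeasureOnCompacts_of_compactSpace.mp inferInstance
  exact hf.integrable_of_hasCompactSupport (isClosed_tsupport f).isCompact

lemma fourierCoeff_fourier_mul (g : UnitAddCircle → ℂ) (m k : ℤ) :
    fourierCoeff (fun x : UnitAddCircle => fourier m x * g x) k = fourierCoeff g (k - m) := by
  unfold fourierCoeff
  apply integral_congr_ae
  filter_upwards with t
  have h : fourier (-k) t * fourier m t = fourier (-(k - m)) t := by
    rw [← fourier_add]; ring_nf
  simp only [smul_eq_mul]
  rw [← mul_assoc, h]

lemma fourierCoeff_norm_le (u : UnitAddCircle → ℂ) (M : ℝ)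
    (hM : ∀ x, ‖u x‖ ≤ M) (k : ℤ) : ‖fourierCoeff u k‖ ≤ M := by
  have h : ‖fourierCoeff u k‖
      ≤ M * ((haarAddCircle : Measure UnitAddCircle) Set.univ).toReal := by
    apply norm_integral_le_of_norm_le_const
    filter_upwards with t
    rw [norm_smul]
    have h1 : ‖(fourier (-k) t : ℂ)‖ = 1 := by simp [fourier_apply, Circle.norm_coe]
    rw [h1, one_mul]; exact hM t
  simpa using h

lemma fourierCoeff_finset_sum (F : Finset ℤ) (h : ℤ → UnitAddCircle → ℂ)
    (hcont : ∀ m ∈ F, Continuous (h m)) (k : ℤ) :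
    fourierCoeff (fun x => ∑ m ∈ F, h m x) k = ∑ m ∈ F, fourierCoeff (h m) k := by
  unfold fourierCoeff
  rw [← integral_finset_sum F (fun m hm => (cont_integrable _
    ((map_continuous (fourier (-k))).smul (hcont m hm)) :
      Integrable (fun t => fourier (-k) t • h m t) haarAddCircle))]
  apply integral_congr_ae
  filter_upwards with t
  rw [Finset.smul_sum]

lemma fourierCoeff_sub (u v : UnitAddCircle → ℂ) (hu : Continuous u) (hv : Continuous v)
    (k : ℤ) : fourierCoeff (fun x => u x - v x) k = fourierCoeff u k - fourierCoeff v k := by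
  unfold fourierCoeff
  rw [← integral_sub (cont_integrable _ ((map_continuous (fourier (-k))).smul hu) :
      Integrable (fun t => fourier (-k) t • u t) haarAddCircle)
    (cont_integrable _ ((map_continuous (fourier (-k))).smul hv) :
      Integrable (fun t => fourier (-k) t • v t) haarAddCircle)]
  apply integral_congr_ae
  filter_upwards with t
  rw [smul_sub]

/-- Bundled partial sums of the Fourier series. -/
def P (f : UnitAddCircle → ℂ) (F : Finset ℤ) : C(UnitAddCircle, ℂ) :=
  ∑ m ∈ F, fourierCoeff f m • fourier m

lemma P_apply (f : UnitAddCircle → ℂ) (F : Finset ℤ) (x : UnitAddCircle) :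
    P f F x = ∑ m ∈ F, fourierCoeff f m • fourier m x := by
  simp [P]

lemma hasSum_fourierCoeff_mul (f g : UnitAddCircle → ℂ) (hf : Continuous f)
    (hg : Continuous g) (hsum : Summable (fourierCoeff f)) (k : ℤ) :
    HasSum (fun m => fourierCoeff f m * fourierCoeff g (k - m)) (fourierCoeff (f * g) k) := by
  classical
  have h1 : HasSum (fun i => fourierCoeff f i • fourier i) (ContinuousMap.mk f hf) :=
    hasSum_fourier_series_of_summable (f := ContinuousMap.mk f hf) hsum
  -- identify partial sums of the convolution with coefficients of (P F) * g
  have key : ∀ F : Finset ℤ,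
      (∑ m ∈ F, fourierCoeff f m * fourierCoeff g (k - m))
        = fourierCoeff (fun x => P f F x * g x) k := by
    intro F
    have e1 : (fun x => P f F x * g x)
        = fun x => ∑ m ∈ F, (fun (m : ℤ) (x : UnitAddCircle) =>
            fourierCoeff f m * (fourier m x * g x)) m x := by
      funext x
      rw [P_apply, Finset.sum_mul]
      exact Finset.sum_congr rfl fun m _ => by rw [smul_eq_mul, mul_assoc]
    rw [e1, fourierCoeff_finset_sum _ _ (fun m _ => by
      exact ((continuous_const.mul ((map_continuous (fourier m)).mul hg))))]
    exact (Finset.sum_congr rfl fun m _ => by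
      rw [fourierCoeff.const_mul, fourierCoeff_fourier_mul]).symm
  rw [HasSum]
  simp only [key]
  -- squeeze argument
  rw [tendsto_iff_norm_sub_tendsto_zero]
  have hbound : ∀ F : Finset ℤ,
      ‖fourierCoeff (fun x => P f F x * g x) k - fourierCoeff (f * g) k‖
        ≤ ‖P f F - (ContinuousMap.mk f hf)‖ * ‖(ContinuousMap.mk g hg)‖ := by
    intro F
    have e2 : fourierCoeff (fun x => P f F x * g x) k - fourierCoeff (f * g) k
        = fourierCoeff (fun x => (P f F x - f x) * g x) k := by
      rw [← fourierCoeff_sub (fun x => P f F x * g x) (f * g) ((map_continuous (P f F)).mul hg) ((hf.mul hg))]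
      congr 1
      funext x
      simp only [Pi.mul_apply]
      ring
    rw [e2]
    apply fourierCoeff_norm_le
    intro x
    rw [norm_mul]
    have b1 : ‖P f F x - f x‖ ≤ ‖P f F - (ContinuousMap.mk f hf)‖ := by
      have := (P f F - (ContinuousMap.mk f hf)).norm_coe_le_norm x
      simpa using this
    have b2 : ‖g x‖ ≤ ‖(ContinuousMap.mk g hg)‖ := (ContinuousMap.mk g hg).norm_coe_le_norm x
    exact mul_le_mul b1 b2 (norm_nonneg _) (norm_nonneg _)
  have h2 : Filter.Tendsto (fun F => ‖P f F - (ContinuousMap.mk f hf)‖ * ‖(ContinuousMap.mk g hg)‖) Filter.atTop (nhds 0) := by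
    have h3 := (tendsto_iff_norm_sub_tendsto_zero.1 h1)
    have h4 := h3.mul_const ‖(ContinuousMap.mk g hg)‖
    simpa [P] using h4
  exact squeeze_zero (fun F => norm_nonneg _) hbound h2


lemma weight_E (k m : ℤ) : w k ≤ 4 * (w m + w (k - m)) := by
  calc w k ≤ ENNReal.ofReal (4 * (a m ^ ((3:ℝ)/4) + a (k - m) ^ ((3:ℝ)/4))) :=
        ENNReal.ofReal_le_ofReal (weight_ineq k m)
    _ = 4 * (w m + w (k - m)) := by
        rw [ENNReal.ofReal_mul (by norm_num),
          ENNReal.ofReal_add (Real.rpow_nonneg (a_pos m).le _) (Real.rpow_nonneg (a_pos _).le _)]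
        norm_num [w]


-- actual new material

lemma conv_bound (f g : UnitAddCircle → ℂ) (hf : Continuous f) (hg : Continuous g)
    (hl1 : Summable fun m => ‖fourierCoeff f m‖) (k : ℤ) :
    Ef (f * g) k ≤ ∑' m, Ef f m * Ef g (k - m) := by
  have hs := hasSum_fourierCoeff_mul f g hf hg hl1.of_norm k
  -- bound on coefficients of g
  set Mg : ℝ := ‖(ContinuousMap.mk g hg)‖ with hMg
  have hgb : ∀ j : ℤ, ‖fourierCoeff g j‖ ≤ Mg :=
    fun j => fourierCoeff_norm_le g Mg ((ContinuousMap.mk g hg).norm_coe_le_norm) j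
  have hnorms : Summable fun m => ‖fourierCoeff f m * fourierCoeff g (k - m)‖ := by
    refine Summable.of_nonneg_of_le (fun m => norm_nonneg _) (fun m => ?_) (hl1.mul_right Mg)
    rw [norm_mul]
    exact mul_le_mul_of_nonneg_left (hgb _) (norm_nonneg _)
  have h0 : ‖fourierCoeff (f * g) k‖ ≤ ∑' m, ‖fourierCoeff f m * fourierCoeff g (k - m)‖ := by
    rw [← hs.tsum_eq]
    exact norm_tsum_le_tsum_norm hnorms
  calc Ef (f * g) k ≤ ENNReal.ofReal (∑' m, ‖fourierCoeff f m * fourierCoeff g (k - m)‖) :=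
        ENNReal.ofReal_le_ofReal h0
    _ = ∑' m, Ef f m * Ef g (k - m) := by
        rw [ENNReal.ofReal_tsum_of_nonneg (fun m => norm_nonneg _) hnorms]
        refine tsum_congr fun m => ?_
        rw [norm_mul, ENNReal.ofReal_mul (norm_nonneg _)]
        rfl

lemma main_bound (f g : UnitAddCircle → ℂ) (hf : Continuous f) (hg : Continuous g)
    (hl1f : Summable fun m => ‖fourierCoeff f m‖) :
    ∑' k, (w k * Ef (f * g) k) ^ 2
      ≤ 48 * ((∑' k, (w k * Ef f k) ^ 2) * (∑' k, Ef g k) ^ 2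
          + (∑' k, (w k * Ef g k) ^ 2) * (∑' k, Ef f k) ^ 2) := by
  -- pointwise bound
  have pt : ∀ k, w k * Ef (f * g) k
      ≤ 4 * (∑' m, (w m * Ef f m) * Ef g (k - m))
        + 4 * (∑' m, Ef f m * (w (k - m) * Ef g (k - m))) := by
    intro k
    calc w k * Ef (f * g) k ≤ w k * ∑' m, Ef f m * Ef g (k - m) :=
          mul_le_mul_right (conv_bound f g hf hg hl1f k) _
      _ = ∑' m, w k * (Ef f m * Ef g (k - m)) := ENNReal.tsum_mul_left.symm
      _ ≤ ∑' m, (4 * (w m + w (k - m))) * (Ef f m * Ef g (k - m)) :=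
          ENNReal.tsum_le_tsum fun m => mul_le_mul_left (weight_E k m) _
      _ = ∑' m, (4 * ((w m * Ef f m) * Ef g (k - m)) + 4 * (Ef f m * (w (k - m) * Ef g (k - m)))) := by
          refine tsum_congr fun m => ?_
          ring
      _ = 4 * (∑' m, (w m * Ef f m) * Ef g (k - m))
          + 4 * (∑' m, Ef f m * (w (k - m) * Ef g (k - m))) := by
          rw [ENNReal.tsum_add, ENNReal.tsum_mul_left, ENNReal.tsum_mul_left]
  -- square it
  have sq : ∀ k, (w k * Ef (f * g) k) ^ 2
      ≤ 48 * ((∑' m, (w m * Ef f m) * Ef g (k - m)) ^ 2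
          + (∑' m, Ef f m * (w (k - m) * Ef g (k - m))) ^ 2) := by
    intro k
    calc (w k * Ef (f * g) k) ^ 2
        ≤ (4 * (∑' m, (w m * Ef f m) * Ef g (k - m))
            + 4 * (∑' m, Ef f m * (w (k - m) * Ef g (k - m)))) ^ 2 :=
          pow_le_pow_left' (pt k) 2
      _ ≤ 3 * ((4 * (∑' m, (w m * Ef f m) * Ef g (k - m))) ^ 2
            + (4 * (∑' m, Ef f m * (w (k - m) * Ef g (k - m)))) ^ 2) := sq_add_le_ennreal _ _
      _ = 48 * ((∑' m, (w m * Ef f m) * Ef g (k - m)) ^ 2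
            + (∑' m, Ef f m * (w (k - m) * Ef g (k - m))) ^ 2) := by ring
  -- reindex the second convolution
  have reix : ∀ k, (∑' m, Ef f m * (w (k - m) * Ef g (k - m)))
      = ∑' m, (w m * Ef g m) * Ef f (k - m) := by
    intro k
    have := (Equiv.subLeft k).tsum_eq (fun m => (w m * Ef g m) * Ef f (k - m))
    rw [← this]
    refine tsum_congr fun m => ?_
    simp only [Equiv.subLeft_apply, sub_sub_cancel]
    ring
  calc ∑' k, (w k * Ef (f * g) k) ^ 2
      ≤ ∑' k, 48 * ((∑' m, (w m * Ef f m) * Ef g (k - m)) ^ 2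
          + (∑' m, Ef f m * (w (k - m) * Ef g (k - m))) ^ 2) := ENNReal.tsum_le_tsum sq
    _ = 48 * ((∑' k, (∑' m, (w m * Ef f m) * Ef g (k - m)) ^ 2)
          + ∑' k, (∑' m, (w m * Ef g m) * Ef f (k - m)) ^ 2) := by
        simp only [reix]
        rw [ENNReal.tsum_mul_left, ENNReal.tsum_add]
    _ ≤ 48 * ((∑' m, (w m * Ef f m) ^ 2) * (∑' m, Ef g m) ^ 2
          + (∑' m, (w m * Ef g m) ^ 2) * (∑' m, Ef f m) ^ 2) := by
        refine mul_le_mul_right (add_le_add (tsum_young _ _) (tsum_young _ _)) _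

def Kr : ℝ := ∑' k : ℤ, a k ^ (-(5:ℝ)/4)

lemma Kr_nonneg : 0 ≤ Kr := tsum_nonneg fun k => Real.rpow_nonneg (a_pos k).le _

lemma sq_w_pointwise (f : UnitAddCircle → ℂ) (k : ℤ) :
    (w k * Ef f k) ^ 2 = ENNReal.ofReal (a k ^ (1.5:ℝ) * ‖fourierCoeff f k‖ ^ 2) := by
  rw [w, Ef, ← ENNReal.ofReal_mul (Real.rpow_nonneg (a_pos k).le _),
    ← ENNReal.ofReal_pow (mul_nonneg (Real.rpow_nonneg (a_pos k).le _) (norm_nonneg _))]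
  congr 1
  rw [mul_pow, rpow_sq]
  norm_num

lemma sum_sq_w_eq (f : UnitAddCircle → ℂ)
    (hs : Summable fun k => a k ^ (1.5:ℝ) * ‖fourierCoeff f k‖ ^ 2) :
    ∑' k, (w k * Ef f k) ^ 2
      = ENNReal.ofReal (∑' k, a k ^ (1.5:ℝ) * ‖fourierCoeff f k‖ ^ 2) := by
  rw [ENNReal.ofReal_tsum_of_nonneg
    (fun k => mul_nonneg (Real.rpow_nonneg (a_pos k).le _) (sq_nonneg _)) hs]
  exact tsum_congr fun k => sq_w_pointwise f k

lemma l1_sq (g : UnitAddCircle → ℂ)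
    (hs : Summable fun k => a k ^ (1.25:ℝ) * ‖fourierCoeff g k‖ ^ 2) :
    (∑' m, Ef g m) ^ 2
      ≤ ENNReal.ofReal Kr
          * ENNReal.ofReal (∑' k, a k ^ (1.25:ℝ) * ‖fourierCoeff g k‖ ^ 2) := by
  have h := tsum_CS (fun m => ENNReal.ofReal (a m ^ (-(5:ℝ)/8)))
    (fun m => ENNReal.ofReal (a m ^ ((5:ℝ)/8) * ‖fourierCoeff g m‖))
  have e1 : ∀ m : ℤ, ENNReal.ofReal (a m ^ (-(5:ℝ)/8))
      * ENNReal.ofReal (a m ^ ((5:ℝ)/8) * ‖fourierCoeff g m‖) = Ef g m := by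
    intro m
    rw [← ENNReal.ofReal_mul (Real.rpow_nonneg (a_pos m).le _)]
    congr 1
    rw [← mul_assoc, ← Real.rpow_add (a_pos m)]
    norm_num
  have e2 : ∀ m : ℤ, (ENNReal.ofReal (a m ^ (-(5:ℝ)/8))) ^ 2
      = ENNReal.ofReal (a m ^ (-(5:ℝ)/4)) := by
    intro m
    rw [← ENNReal.ofReal_pow (Real.rpow_nonneg (a_pos m).le _), rpow_sq]
    norm_num
  have e3 : ∀ m : ℤ, (ENNReal.ofReal (a m ^ ((5:ℝ)/8) * ‖fourierCoeff g m‖)) ^ 2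
      = ENNReal.ofReal (a m ^ (1.25:ℝ) * ‖fourierCoeff g m‖ ^ 2) := by
    intro m
    rw [← ENNReal.ofReal_pow (mul_nonneg (Real.rpow_nonneg (a_pos m).le _) (norm_nonneg _))]
    congr 1
    rw [mul_pow, rpow_sq]
    norm_num
  simp only [e1, e2, e3] at h
  calc (∑' m, Ef g m) ^ 2
      ≤ (∑' m, ENNReal.ofReal (a m ^ (-(5:ℝ)/4)))
          * (∑' m, ENNReal.ofReal (a m ^ (1.25:ℝ) * ‖fourierCoeff g m‖ ^ 2)) := h
    _ = ENNReal.ofReal Kr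
          * ENNReal.ofReal (∑' k, a k ^ (1.25:ℝ) * ‖fourierCoeff g k‖ ^ 2) := by
        rw [← ENNReal.ofReal_tsum_of_nonneg (fun k => Real.rpow_nonneg (a_pos k).le _)
            summable_a_neg,
          ← ENNReal.ofReal_tsum_of_nonneg
            (fun k => mul_nonneg (Real.rpow_nonneg (a_pos k).le _) (sq_nonneg _)) hs]
        rfl

lemma mem125_of_15 (f : UnitAddCircle → ℂ)
    (h : Summable fun k => a k ^ (1.5:ℝ) * ‖fourierCoeff f k‖ ^ 2) :
    Summable fun k => a k ^ (1.25:ℝ) * ‖fourierCoeff f k‖ ^ 2 := by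
  refine Summable.of_nonneg_of_le
    (fun k => mul_nonneg (Real.rpow_nonneg (a_pos k).le _) (sq_nonneg _)) (fun k => ?_) h
  exact mul_le_mul_of_nonneg_right
    (Real.rpow_le_rpow_of_exponent_le (one_le_a k) (by norm_num)) (sq_nonneg _)

lemma l1_summable (f : UnitAddCircle → ℂ)
    (h125 : Summable fun k => a k ^ (1.25:ℝ) * ‖fourierCoeff f k‖ ^ 2) :
    Summable fun k => ‖fourierCoeff f k‖ := by
  refine Summable.of_nonneg_of_le (fun k => norm_nonneg _) (fun k => ?_)
    ((summable_a_neg.add h125).mul_left (1/2))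
  set x := a k ^ (-(5:ℝ)/8) with hx
  set y := a k ^ ((5:ℝ)/8) * ‖fourierCoeff f k‖ with hy
  have hxy : ‖fourierCoeff f k‖ = x * y := by
    rw [hx, hy, ← mul_assoc, ← Real.rpow_add (a_pos k)]
    norm_num
  have hx2 : x ^ 2 = a k ^ (-(5:ℝ)/4) := by rw [hx, rpow_sq]; norm_num
  have hy2 : y ^ 2 = a k ^ (1.25:ℝ) * ‖fourierCoeff f k‖ ^ 2 := by
    rw [hy, mul_pow, rpow_sq]; norm_num
  have amgm := two_mul_le_add_sq x y
  nlinarith [amgm, hxy, hx2, hy2]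

end Stmt9
end Stmt9Aux

open Stmt9
open scoped ENNReal

set_option maxHeartbeats 1000000

/-- Bilinear (tame) product estimate in fractional Sobolev spaces on the circle:
`‖fg‖_{H^{1.5}} ≤ C (‖f‖_{H^{1.25}} ‖g‖_{H^{1.5}} + ‖f‖_{H^{1.5}} ‖g‖_{H^{1.25}})`. -/
theorem stmt_9 :
    ∃ C > (0 : ℝ), ∀ f g : UnitAddCircle → ℂ, Continuous f → Continuous g →
      MemHs 1.5 f → MemHs 1.5 g →
      HsNorm 1.5 (f * g)
        ≤ C * (HsNorm 1.25 f * HsNorm 1.5 g + HsNorm 1.5 f * HsNorm 1.25 g) := by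
  refine ⟨Real.sqrt (48 * Kr) + 1, by positivity, fun f g hf hg hMf hMg => ?_⟩
  set C : ℝ := Real.sqrt (48 * Kr) + 1 with hC
  -- real summability facts
  have hf15 : Summable fun k => a k ^ (1.5:ℝ) * ‖fourierCoeff f k‖ ^ 2 := hMf
  have hg15 : Summable fun k => a k ^ (1.5:ℝ) * ‖fourierCoeff g k‖ ^ 2 := hMg
  have hf125 := mem125_of_15 f hf15
  have hg125 := mem125_of_15 g hg15
  have hl1f := l1_summable f hf125
  have hl1g := l1_summable g hg125
  -- real sums
  set Xfg : ℝ := ∑' k, a k ^ (1.5:ℝ) * ‖fourierCoeff (f * g) k‖ ^ 2 with hXfg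
  set Xf15 : ℝ := ∑' k, a k ^ (1.5:ℝ) * ‖fourierCoeff f k‖ ^ 2 with hXf15
  set Xg15 : ℝ := ∑' k, a k ^ (1.5:ℝ) * ‖fourierCoeff g k‖ ^ 2 with hXg15
  set Xf125 : ℝ := ∑' k, a k ^ (1.25:ℝ) * ‖fourierCoeff f k‖ ^ 2 with hXf125
  set Xg125 : ℝ := ∑' k, a k ^ (1.25:ℝ) * ‖fourierCoeff g k‖ ^ 2 with hXg125
  have hXf15nn : 0 ≤ Xf15 := tsum_nonneg fun k =>
    mul_nonneg (Real.rpow_nonneg (a_pos k).le _) (sq_nonneg _)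
  have hXg15nn : 0 ≤ Xg15 := tsum_nonneg fun k =>
    mul_nonneg (Real.rpow_nonneg (a_pos k).le _) (sq_nonneg _)
  have hXf125nn : 0 ≤ Xf125 := tsum_nonneg fun k =>
    mul_nonneg (Real.rpow_nonneg (a_pos k).le _) (sq_nonneg _)
  have hXg125nn : 0 ≤ Xg125 := tsum_nonneg fun k =>
    mul_nonneg (Real.rpow_nonneg (a_pos k).le _) (sq_nonneg _)
  -- the ENNReal chain
  have hmain : (∑' k, ENNReal.ofReal (a k ^ (1.5:ℝ) * ‖fourierCoeff (f * g) k‖ ^ 2))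
      ≤ ENNReal.ofReal (48 * Kr * (Xf15 * Xg125 + Xg15 * Xf125)) := by
    have h1 : (∑' k, ENNReal.ofReal (a k ^ (1.5:ℝ) * ‖fourierCoeff (f * g) k‖ ^ 2))
        = ∑' k, (w k * Ef (f * g) k) ^ 2 :=
      (tsum_congr fun k => (sq_w_pointwise (f * g) k).symm)
    rw [h1]
    calc ∑' k, (w k * Ef (f * g) k) ^ 2
        ≤ 48 * ((∑' k, (w k * Ef f k) ^ 2) * (∑' k, Ef g k) ^ 2
            + (∑' k, (w k * Ef g k) ^ 2) * (∑' k, Ef f k) ^ 2) :=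
          main_bound f g hf hg hl1f
      _ ≤ 48 * (ENNReal.ofReal Xf15 * (ENNReal.ofReal Kr * ENNReal.ofReal Xg125)
            + ENNReal.ofReal Xg15 * (ENNReal.ofReal Kr * ENNReal.ofReal Xf125)) := by
          refine mul_le_mul_right (add_le_add ?_ ?_) _
          · rw [sum_sq_w_eq f hf15]
            exact mul_le_mul_right (l1_sq g hg125) _
          · rw [sum_sq_w_eq g hg15]
            exact mul_le_mul_right (l1_sq f hf125) _
      _ = ENNReal.ofReal (48 * Kr * (Xf15 * Xg125 + Xg15 * Xf125)) := by
          rw [← ENNReal.ofReal_mul Kr_nonneg, ← ENNReal.ofReal_mul Kr_nonneg,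
            ← ENNReal.ofReal_mul hXf15nn, ← ENNReal.ofReal_mul hXg15nn,
            ← ENNReal.ofReal_add (mul_nonneg hXf15nn (mul_nonneg Kr_nonneg hXg125nn))
              (mul_nonneg hXg15nn (mul_nonneg Kr_nonneg hXf125nn)),
            ← ENNReal.ofReal_ofNat 48,
            ← ENNReal.ofReal_mul (by norm_num)]
          congr 1
          ring
  -- summability of the product series and real bound
  have hterm_nn : ∀ k : ℤ, 0 ≤ a k ^ (1.5:ℝ) * ‖fourierCoeff (f * g) k‖ ^ 2 :=
    fun k => mul_nonneg (Real.rpow_nonneg (a_pos k).le _) (sq_nonneg _)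
  have hBnn : 0 ≤ 48 * Kr * (Xf15 * Xg125 + Xg15 * Xf125) :=
    mul_nonneg (mul_nonneg (by norm_num) Kr_nonneg)
      (add_nonneg (mul_nonneg hXf15nn hXg125nn) (mul_nonneg hXg15nn hXf125nn))
  have hne : (∑' k, ENNReal.ofReal (a k ^ (1.5:ℝ) * ‖fourierCoeff (f * g) k‖ ^ 2)) ≠ ⊤ :=
    (lt_of_le_of_lt hmain ENNReal.ofReal_lt_top).ne
  have hsummable : Summable (fun k => a k ^ (1.5:ℝ) * ‖fourierCoeff (f * g) k‖ ^ 2) := by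
    have h2 : (∑' k, ((a k ^ (1.5:ℝ) * ‖fourierCoeff (f * g) k‖ ^ 2).toNNReal : ℝ≥0∞)) ≠ ⊤ := by
      convert hne using 2
      rfl
    have h3 := ENNReal.tsum_coe_ne_top_iff_summable.1 h2
    exact (NNReal.summable_coe.2 h3).congr fun k => Real.coe_toNNReal _ (hterm_nn k)
  have hXfg_le : Xfg ≤ 48 * Kr * (Xf15 * Xg125 + Xg15 * Xf125) := by
    rw [← ENNReal.ofReal_le_ofReal_iff hBnn, hXfg,
      ENNReal.ofReal_tsum_of_nonneg hterm_nn hsummable]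
    exact hmain
  -- identify HsNorm values
  have hHfg : HsNorm 1.5 (f * g) = Real.sqrt Xfg := rfl
  have hHf15 : HsNorm 1.5 f = Real.sqrt Xf15 := rfl
  have hHg15 : HsNorm 1.5 g = Real.sqrt Xg15 := rfl
  have hHf125 : HsNorm 1.25 f = Real.sqrt Xf125 := rfl
  have hHg125 : HsNorm 1.25 g = Real.sqrt Xg125 := rfl
  set R : ℝ := HsNorm 1.25 f * HsNorm 1.5 g + HsNorm 1.5 f * HsNorm 1.25 g with hR
  have hRnn : 0 ≤ R := by
    rw [hR, hHf125, hHg15, hHf15, hHg125]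
    positivity
  have hsq : Xf15 * Xg125 + Xg15 * Xf125 ≤ R ^ 2 := by
    have e1 : Xf15 = (HsNorm 1.5 f) ^ 2 := by rw [hHf15, Real.sq_sqrt hXf15nn]
    have e2 : Xg15 = (HsNorm 1.5 g) ^ 2 := by rw [hHg15, Real.sq_sqrt hXg15nn]
    have e3 : Xf125 = (HsNorm 1.25 f) ^ 2 := by rw [hHf125, Real.sq_sqrt hXf125nn]
    have e4 : Xg125 = (HsNorm 1.25 g) ^ 2 := by rw [hHg125, Real.sq_sqrt hXg125nn]
    have p1 : 0 ≤ HsNorm 1.25 f * HsNorm 1.5 g := by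
      rw [hHf125, hHg15]; positivity
    have p2 : 0 ≤ HsNorm 1.5 f * HsNorm 1.25 g := by
      rw [hHf15, hHg125]; positivity
    rw [e1, e2, e3, e4, hR]
    nlinarith
  calc HsNorm 1.5 (f * g) = Real.sqrt Xfg := hHfg
    _ ≤ Real.sqrt (48 * Kr * R ^ 2) := by
        apply Real.sqrt_le_sqrt
        calc Xfg ≤ 48 * Kr * (Xf15 * Xg125 + Xg15 * Xf125) := hXfg_le
          _ ≤ 48 * Kr * R ^ 2 :=
              mul_le_mul_of_nonneg_left hsq (mul_nonneg (by norm_num) Kr_nonneg)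
    _ = Real.sqrt (48 * Kr) * R := by
        rw [Real.sqrt_mul (by nlinarith [Kr_nonneg]), Real.sqrt_sq hRnn]
    _ ≤ C * R := by
        have : Real.sqrt (48 * Kr) ≤ C := by rw [hC]; linarith
        exact mul_le_mul_of_nonneg_right this hRnn
end
end
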